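/- arXiv:0812.2273 — 6 statements merged into one kernel-verified Lean document; each statement's English description precedes it below -/
import Mathlib

section
/- Let θ > 1/2 and define g : ℝ → ℝ by g(t) = |t|^{2θ} t. There exist constants C₁ > 0 and C₂ > 0, depending only on θ, such that for all a, σ ∈ ℝ: |g(a + σ) − g(a) − (2θ + 1)|a|^{2θ} σ| ≤ (C₁ |a|^{2θ−1} + C₂ |σ|^{2θ−1}) σ². -/
/-!
Set `p = 2θ` and `F(t) = g(a + t) - (p + 1)|a|^p t`. Then `F(σ) - F(0)` is the quantity to be
estimated and `F'(t) = (p + 1)(|a + t|^p - |a|^p)`. Since `p ≥ 1`, the mean value theorem applied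
to `u ↦ u^p` bounds `F'(t)` on `[0, σ]` by a multiple of `(|a| + |σ|)^(p-1) |σ|
≤ 2^(p-1) (|a|^(p-1) + |σ|^(p-1)) |σ|`, and a second application of the mean value theorem, now
to `F`, contributes the remaining factor `|σ|`.
-/

open Set

theorem Real.add_rpow_le_two_rpow_mul_add_rpow {p x y : ℝ} (hp : 0 ≤ p) (hx : 0 ≤ x)
    (hy : 0 ≤ y) : (x + y) ^ p ≤ 2 ^ p * (x ^ p + y ^ p) := calc
  (x + y) ^ p ≤ (2 * max x y) ^ p := by
    rw [two_mul]; gcongr <;> simp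
  _ = 2 ^ p * max x y ^ p := Real.mul_rpow zero_le_two (le_max_of_le_left hx)
  _ = 2 ^ p * max (x ^ p) (y ^ p) := by
    rw [(Real.monotoneOn_rpow_Ici_of_exponent_nonneg hp).map_max hx hy]
  _ ≤ 2 ^ p * (x ^ p + y ^ p) := by
    gcongr; exact max_le_add_of_nonneg (by positivity) (by positivity)

theorem Real.abs_rpow_sub_rpow_le {p u v : ℝ} (hp : 1 ≤ p) (hu : 0 ≤ u) (hv : 0 ≤ v) :
    |u ^ p - v ^ p| ≤ p * max u v ^ (p - 1) * |u - v| := by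
  have hderiv_le : ∀ t ∈ uIcc v u, ‖p * t ^ (p - 1)‖ ≤ p * max u v ^ (p - 1) := fun t ht => by
    have ht0 : 0 ≤ t := (le_min hv hu).trans ht.1
    rw [Real.norm_of_nonneg (by positivity)]
    gcongr
    exact ht.2.trans (max_comm v u).le
  simpa only [Real.norm_eq_abs] using Convex.norm_image_sub_le_of_norm_hasDerivWithin_le
    (fun t _ => (Real.hasDerivAt_rpow_const (Or.inr hp)).hasDerivWithinAt) hderiv_le
    (convex_uIcc v u) left_mem_uIcc right_mem_uIcc

theorem abs_abs_add_rpow_sub_abs_rpow_le {p a t s : ℝ} (hp : 1 ≤ p) (ht : |t| ≤ s) :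
    |(|a + t| ^ p - |a| ^ p)| ≤ p * 2 ^ (p - 1) * (|a| ^ (p - 1) + s ^ (p - 1)) * s := by
  have hs : 0 ≤ s := (abs_nonneg t).trans ht
  have hmax : max |a + t| |a| ≤ |a| + s :=
    max_le ((abs_add_le a t).trans (by linarith)) (le_add_of_nonneg_right hs)
  have hdist : |(|a + t| - |a|)| ≤ s :=
    (abs_abs_sub_abs_le_abs_sub _ _).trans (by simpa using ht)
  calc |(|a + t| ^ p - |a| ^ p)|
      ≤ p * max |a + t| |a| ^ (p - 1) * |(|a + t| - |a|)| :=
        Real.abs_rpow_sub_rpow_le hp (abs_nonneg _) (abs_nonneg _)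
    _ ≤ p * (|a| + s) ^ (p - 1) * s := by
        gcongr
    _ ≤ p * (2 ^ (p - 1) * (|a| ^ (p - 1) + s ^ (p - 1))) * s := by
        gcongr
        exact Real.add_rpow_le_two_rpow_mul_add_rpow (by linarith) (abs_nonneg a) hs
    _ = p * 2 ^ (p - 1) * (|a| ^ (p - 1) + s ^ (p - 1)) * s := by ring

theorem hasDerivAt_abs_rpow_mul_self {p : ℝ} (hp : 1 < p) (x : ℝ) :
    HasDerivAt (fun t : ℝ => |t| ^ p * t) ((p + 1) * |x| ^ p) x := by
  have hsq : |x| ^ (p - 2) * x * x = |x| ^ p := by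
    rw [mul_assoc, ← abs_mul_abs_self, ← sq, ← Real.rpow_two,
      ← Real.rpow_add' (abs_nonneg x) (by linarith), sub_add_cancel]
  refine ((hasDerivAt_abs_rpow x hp).mul (hasDerivAt_id' x)).congr_deriv ?_
  linear_combination p * hsq

theorem abs_rpow_mul_self_taylor_remainder_le {p : ℝ} (hp : 1 < p) (a σ : ℝ) :
    |(|a + σ| ^ p * (a + σ) - |a| ^ p * a - (p + 1) * |a| ^ p * σ)|
      ≤ (p + 1) * p * 2 ^ (p - 1) * (|a| ^ (p - 1) + |σ| ^ (p - 1)) * σ ^ 2 := by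
  set F : ℝ → ℝ := fun t => |a + t| ^ p * (a + t) - (p + 1) * |a| ^ p * t
  have hF : ∀ t, HasDerivAt F ((p + 1) * (|a + t| ^ p - |a| ^ p)) t := fun t => by
    have hg := (hasDerivAt_abs_rpow_mul_self hp (a + t)).comp t ((hasDerivAt_id' t).const_add a)
    refine (hg.sub ((hasDerivAt_id' t).const_mul ((p + 1) * |a| ^ p))).congr_deriv ?_
    ring
  have hF_le : ∀ t ∈ uIcc 0 σ, ‖(p + 1) * (|a + t| ^ p - |a| ^ p)‖
      ≤ (p + 1) * (p * 2 ^ (p - 1) * (|a| ^ (p - 1) + |σ| ^ (p - 1)) * |σ|) := fun t ht => by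
    rw [Real.norm_eq_abs, abs_mul, abs_of_pos (by linarith)]
    gcongr
    exact abs_abs_add_rpow_sub_abs_rpow_le hp.le (by simpa using abs_sub_left_of_mem_uIcc ht)
  have hmvt := Convex.norm_image_sub_le_of_norm_hasDerivWithin_le
    (fun t _ => (hF t).hasDerivWithinAt) hF_le (convex_uIcc 0 σ) left_mem_uIcc right_mem_uIcc
  simp only [F, Real.norm_eq_abs, sub_zero, add_zero, mul_zero] at hmvt
  calc _ = |(|a + σ| ^ p * (a + σ) - (p + 1) * |a| ^ p * σ - |a| ^ p * a)| := by
        congr 1; ring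
    _ ≤ _ := hmvt
    _ = _ := by rw [← sq_abs σ]; ring

/-- Lemma 2.1 of the paper (case `θ > 1/2`): a second-order Taylor-type estimate for the
power nonlinearity `g(t) = |t|^(2θ) t`. -/
theorem taylor_estimate_power_nonlinearity (θ : ℝ) (hθ : 1/2 < θ) :
    ∃ C₁ > (0:ℝ), ∃ C₂ > (0:ℝ), ∀ a σ : ℝ,
      |(|a + σ| ^ (2*θ) * (a + σ) - |a| ^ (2*θ) * a - (2*θ + 1) * |a| ^ (2*θ) * σ)|
        ≤ (C₁ * |a| ^ (2*θ - 1) + C₂ * |σ| ^ (2*θ - 1)) * σ ^ 2 := by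
  have hp : 1 < 2 * θ := by linarith
  have hK : 0 < (2 * θ + 1) * (2 * θ) * 2 ^ (2 * θ - 1) :=
    mul_pos (mul_pos (by linarith) (by linarith)) (by positivity)
  refine ⟨_, hK, _, hK, fun a σ => ?_⟩
  convert abs_rpow_mul_self_taylor_remainder_le hp a σ using 1
  ring
end

section
/- Let 1 ≤ θ < 2. There exists a constant C > 0, depending only on θ, such that for all a, b, c ∈ ℝ: | |a + b + c|^θ − |a + b|^θ − |a + c|^θ + |a|^θ | ≤ C (|c|^{θ−1} + |b|^{θ−1}) |b|. -/
/-!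
For `θ > 1` the function `g t = |t| ^ θ` is differentiable with derivative
`θ * |t| ^ (θ - 2) * t`, the odd extension of `θ * t ^ (θ - 1)`, which is `(θ - 1)`-Hölder with
constant `2 θ`. Hence `t ↦ g (a + c + t) - g (a + t)` has derivative bounded by `2 θ |c| ^ (θ - 1)`,
and the mean value theorem between `0` and `b` gives the bound. For `θ = 1` the triangle
inequality gives it directly.
-/

open Set

namespace Real

variable {α : ℝ}

lemma rpow_sub_rpow_le_rpow_sub (hα₀ : 0 ≤ α) (hα₁ : α ≤ 1) {x y : ℝ} (hy : 0 ≤ y)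
    (hyx : y ≤ x) : x ^ α - y ^ α ≤ (x - y) ^ α := by
  have := rpow_add_le_add_rpow (sub_nonneg.mpr hyx) hy hα₀ hα₁
  rw [sub_add_cancel] at this
  linarith

lemma abs_rpow_sub_rpow_le_s7 (hα₀ : 0 ≤ α) (hα₁ : α ≤ 1) {x y : ℝ} (hx : 0 ≤ x) (hy : 0 ≤ y) :
    |x ^ α - y ^ α| ≤ |x - y| ^ α := by
  wlog hyx : y ≤ x generalizing x y
  · rw [abs_sub_comm, abs_sub_comm x]
    exact this hy hx (le_of_not_ge hyx)
  rw [abs_of_nonneg (sub_nonneg.mpr (rpow_le_rpow hy hyx hα₀)),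
    abs_of_nonneg (sub_nonneg.mpr hyx)]
  exact rpow_sub_rpow_le_rpow_sub hα₀ hα₁ hy hyx

lemma abs_rpow_sub_one_mul_self_of_nonneg (hα : α ≠ 0) {t : ℝ} (ht : 0 ≤ t) :
    |t| ^ (α - 1) * t = t ^ α := by
  rw [abs_of_nonneg ht, ← rpow_add_one' ht (by simpa using hα), sub_add_cancel]

lemma abs_rpow_sub_one_mul_self_of_nonpos (hα : α ≠ 0) {t : ℝ} (ht : t ≤ 0) :
    |t| ^ (α - 1) * t = -(-t) ^ α := by
  rw [← abs_rpow_sub_one_mul_self_of_nonneg hα (neg_nonneg.mpr ht), abs_neg, mul_neg, neg_neg]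

lemma abs_abs_rpow_sub_one_mul_self_sub_le (hα₀ : 0 < α) (hα₁ : α ≤ 1) (u v : ℝ) :
    |(|u| ^ (α - 1) * u - |v| ^ (α - 1) * v)| ≤ 2 * |u - v| ^ α := by
  wlog hvu : v ≤ u generalizing u v
  · rw [abs_sub_comm, abs_sub_comm u]
    exact this v u (le_of_not_ge hvu)
  have hα : α ≠ 0 := hα₀.ne'
  rcases le_total 0 v with hv | hv
  · rw [abs_rpow_sub_one_mul_self_of_nonneg hα hv,
      abs_rpow_sub_one_mul_self_of_nonneg hα (hv.trans hvu)]
    exact (abs_rpow_sub_rpow_le_s7 hα₀.le hα₁ (hv.trans hvu) hv).trans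
      (le_mul_of_one_le_left (by positivity) one_le_two)
  rcases le_total u 0 with hu | hu
  · rw [abs_rpow_sub_one_mul_self_of_nonpos hα hu, abs_rpow_sub_one_mul_self_of_nonpos hα hv,
      neg_sub_neg, ← neg_sub_neg v u]
    exact (abs_rpow_sub_rpow_le_s7 hα₀.le hα₁ (neg_nonneg.mpr hv) (neg_nonneg.mpr hu)).trans
      (le_mul_of_one_le_left (by positivity) one_le_two)
  -- opposite signs: each of `u ^ α` and `(-v) ^ α` is at most `(u - v) ^ α`
  rw [abs_rpow_sub_one_mul_self_of_nonneg hα hu, abs_rpow_sub_one_mul_self_of_nonpos hα hv,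
    sub_neg_eq_add, abs_of_nonneg (sub_nonneg.mpr hvu)]
  have hu' : u ^ α ≤ (u - v) ^ α := rpow_le_rpow hu (by linarith) hα₀.le
  have hv' : (-v) ^ α ≤ (u - v) ^ α := rpow_le_rpow (by linarith) (by linarith) hα₀.le
  rw [abs_of_nonneg (add_nonneg (rpow_nonneg hu _) (rpow_nonneg (neg_nonneg.mpr hv) _))]
  linarith

end Real

open Real

variable {a b c : ℝ}

lemma abs_second_difference_abs_le :
    |(|a + b + c| - |a + b| - |a + c| + |a|)| ≤ 2 * |b| := by
  have hc : |(|a + b + c| - |a + c|)| ≤ |b| := by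
    simpa [add_right_comm a b c] using abs_abs_sub_abs_le_abs_sub (a + c + b) (a + c)
  have h₀ : |(|a + b| - |a|)| ≤ |b| := by
    simpa using abs_abs_sub_abs_le_abs_sub (a + b) a
  calc |(|a + b + c| - |a + b| - |a + c| + |a|)|
      = |(|a + b + c| - |a + c|) - (|a + b| - |a|)| := by ring_nf
    _ ≤ |(|a + b + c| - |a + c|)| + |(|a + b| - |a|)| := abs_sub _ _
    _ ≤ 2 * |b| := by linarith

lemma abs_second_difference_abs_rpow_le_of_one_lt {θ : ℝ} (hθ₁ : 1 < θ) (hθ₂ : θ ≤ 2) :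
    |(|a + b + c| ^ θ - |a + b| ^ θ - |a + c| ^ θ + |a| ^ θ)|
      ≤ 2 * θ * |c| ^ (θ - 1) * |b| := by
  set F : ℝ → ℝ := fun t ↦ |a + c + t| ^ θ - |a + t| ^ θ
  set F' : ℝ → ℝ := fun t ↦
    θ * |a + c + t| ^ (θ - 2) * (a + c + t) - θ * |a + t| ^ (θ - 2) * (a + t)
  have hF : ∀ t, HasDerivAt F (F' t) t := fun t ↦
    (((hasDerivAt_abs_rpow _ hθ₁).comp t ((hasDerivAt_id t).const_add (a + c))).sub
      ((hasDerivAt_abs_rpow _ hθ₁).comp t ((hasDerivAt_id t).const_add a))).congr_deriv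
      (by simp [F'])
  have hF' : ∀ t, ‖F' t‖ ≤ 2 * θ * |c| ^ (θ - 1) := fun t ↦ by
    have h := abs_abs_rpow_sub_one_mul_self_sub_le (α := θ - 1) (by linarith) (by linarith)
      (a + c + t) (a + t)
    rw [show θ - 1 - 1 = θ - 2 by ring, show a + c + t - (a + t) = c by ring] at h
    have hθ : 0 < θ := by linarith
    calc ‖F' t‖
        = θ * |(|a + c + t| ^ (θ - 2) * (a + c + t) - |a + t| ^ (θ - 2) * (a + t))| := by
          rw [norm_eq_abs, ← abs_of_pos hθ, ← abs_mul, abs_of_pos hθ, mul_sub, ← mul_assoc,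
            ← mul_assoc]
      _ ≤ θ * (2 * |c| ^ (θ - 1)) := by gcongr
      _ = 2 * θ * |c| ^ (θ - 1) := by ring
  have hmvt := convex_univ.norm_image_sub_le_of_norm_hasDerivWithin_le
    (fun t _ ↦ (hF t).hasDerivWithinAt) (fun t _ ↦ hF' t) (mem_univ 0) (mem_univ b)
  simpa [F, add_right_comm a c b, sub_sub_eq_add_sub, add_sub_right_comm] using hmvt

lemma abs_second_difference_abs_rpow_le {θ : ℝ} (hθ₁ : 1 ≤ θ) (hθ₂ : θ ≤ 2) :
    |(|a + b + c| ^ θ - |a + b| ^ θ - |a + c| ^ θ + |a| ^ θ)|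
      ≤ 2 * θ * |c| ^ (θ - 1) * |b| := by
  rcases hθ₁.eq_or_lt with rfl | hθ₁
  · simpa using abs_second_difference_abs_le
  · exact abs_second_difference_abs_rpow_le_of_one_lt hθ₁ hθ₂

/-- Lemma 2.3 of the paper: a second-difference estimate for the power function `t ↦ |t|^θ`
in the range `1 ≤ θ < 2` (for `θ = 1`, `|c|^(θ-1)` and `|b|^(θ-1)` are interpreted with the
real-power convention `0 ^ 0 = 1`). -/
theorem abs_rpow_second_difference_estimate (θ : ℝ) (hθ₁ : 1 ≤ θ) (hθ₂ : θ < 2) :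
    ∃ C > (0:ℝ), ∀ a b c : ℝ,
      |(|a + b + c| ^ θ - |a + b| ^ θ - |a + c| ^ θ + |a| ^ θ)|
        ≤ C * (|c| ^ (θ - 1) + |b| ^ (θ - 1)) * |b| := by
  refine ⟨2 * θ, by linarith, fun a b c ↦ ?_⟩
  calc _ ≤ 2 * θ * |c| ^ (θ - 1) * |b| := abs_second_difference_abs_rpow_le hθ₁ hθ₂.le
    _ ≤ 2 * θ * (|c| ^ (θ - 1) + |b| ^ (θ - 1)) * |b| := by
      gcongr
      exact le_add_of_nonneg_right (by positivity)
end

section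
/- Let F : (0,∞) → ℝ be continuously differentiable and bounded, and suppose there exists M ≥ 0 such that |F'(r) + (2/r) F(r)| ≤ M for all r > 0. Then |F(r)| ≤ (M/3) r for all r > 0; in particular sup_{r>0} |F(r)/r| ≤ (1/3) sup_{r>0} |F'(r) + (2/r) F(r)|. -/
/-!
With `G r = r ^ k * F r` one has `G' r = r ^ k * (F' r + (k / r) * F r)`, so `|G'| ≤ M r ^ k`.
Boundedness of `F` makes `G` vanish at `0⁺`, hence integrating from `0` gives
`r ^ k |F r| ≤ M r ^ (k + 1) / (k + 1)`, i.e. `|F r| ≤ M r / (k + 1)`; the case `k = 2` is the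
radial divergence on `ℝ³`.
-/

open Set Filter Topology

theorem norm_le_of_tendsto_zero_of_norm_deriv_le_mul_pow {E : Type*} [NormedAddCommGroup E]
    [NormedSpace ℝ E] {f f' : ℝ → E} {C : ℝ} (n : ℕ)
    (hf : ∀ t > 0, HasDerivAt f (f' t) t) (hf0 : Tendsto f (𝓝[>] 0) (𝓝 0))
    (hf' : ∀ t > 0, ‖f' t‖ ≤ C * t ^ n) {r : ℝ} (hr : 0 < r) :
    ‖f r‖ ≤ C * r ^ (n + 1) / (n + 1) := by
  have hfence : ∀ ε ∈ Ioo 0 r, ‖f r‖ ≤ ‖f ε‖ + C * (r ^ (n + 1) - ε ^ (n + 1)) / (n + 1) := by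
    rintro ε ⟨hε0, hεr⟩
    have hpos : ∀ t ∈ Icc ε r, 0 < t := fun t ht => hε0.trans_le ht.1
    refine image_norm_le_of_norm_deriv_right_le_deriv_boundary
      (B := fun t => ‖f ε‖ + C * (t ^ (n + 1) - ε ^ (n + 1)) / (n + 1)) (B' := fun t => C * t ^ n)
      (fun t ht => (hf t (hpos t ht)).continuousAt.continuousWithinAt)
      (fun t ht => (hf t (hpos t (Ico_subset_Icc_self ht))).hasDerivWithinAt) (by simp) (fun t => ?_)
      (fun t ht => hf' t (hpos t (Ico_subset_Icc_self ht))) ⟨hεr.le, le_rfl⟩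
    refine ((((hasDerivAt_pow (n + 1) t).sub_const (ε ^ (n + 1))).const_mul C).div_const
      (n + 1 : ℝ) |>.const_add ‖f ε‖).congr_deriv ?_
    rw [Nat.add_sub_cancel]
    push_cast
    field_simp
  have hlim : Tendsto (fun ε => ‖f ε‖ + C * (r ^ (n + 1) - ε ^ (n + 1)) / (n + 1)) (𝓝[>] 0)
      (𝓝 (C * r ^ (n + 1) / (n + 1))) := by
    have hpoly : Continuous fun ε : ℝ => C * (r ^ (n + 1) - ε ^ (n + 1)) / (n + 1) := by fun_prop
    simpa using hf0.norm.add ((hpoly.tendsto 0).mono_left nhdsWithin_le_nhds)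
  exact ge_of_tendsto hlim (mem_of_superset (Ioo_mem_nhdsGT hr) hfence)

theorem HasDerivAt.pow_mul_of_ne_zero (k : ℕ) {F : ℝ → ℝ} {F' t : ℝ} (ht : t ≠ 0)
    (hF : HasDerivAt F F' t) :
    HasDerivAt (fun s => s ^ k * F s) (t ^ k * (F' + k / t * F t)) t := by
  refine ((hasDerivAt_pow k t).mul hF).congr_deriv ?_
  rcases k with _ | k
  · simp
  · simp only [Nat.add_sub_cancel]
    field_simp
    push_cast
    ring

theorem tendsto_pow_mul_nhdsGT_zero_of_bounded {k : ℕ} (hk : k ≠ 0) {F : ℝ → ℝ}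
    (hbd : ∃ B : ℝ, ∀ r > (0:ℝ), |F r| ≤ B) :
    Tendsto (fun t => t ^ k * F t) (𝓝[>] 0) (𝓝 0) := by
  obtain ⟨B, hB⟩ := hbd
  have hpow : Tendsto (fun t : ℝ => t ^ k) (𝓝[>] 0) (𝓝 0) := by
    simpa [zero_pow hk] using ((continuous_pow k).tendsto (0 : ℝ)).mono_left nhdsWithin_le_nhds
  exact hpow.zero_mul_isBoundedUnder_le ⟨B, eventually_nhdsWithin_of_forall fun r hr => hB r hr⟩

theorem abs_le_mul_of_abs_deriv_add_div_mul_le (k : ℕ) (hk : k ≠ 0) {F : ℝ → ℝ} {M : ℝ}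
    (hF : DifferentiableOn ℝ F (Ioi 0)) (hbd : ∃ B : ℝ, ∀ r > (0:ℝ), |F r| ≤ B)
    (hM : ∀ r > (0:ℝ), |deriv F r + k / r * F r| ≤ M) {r : ℝ} (hr : 0 < r) :
    |F r| ≤ M / (k + 1) * r := by
  have hderiv : ∀ t > (0:ℝ), HasDerivAt (fun s => s ^ k * F s)
      (t ^ k * (deriv F t + k / t * F t)) t := fun t ht =>
    ((hF.differentiableAt (Ioi_mem_nhds ht)).hasDerivAt).pow_mul_of_ne_zero k ht.ne'
  have hbound : ∀ t > (0:ℝ), ‖t ^ k * (deriv F t + k / t * F t)‖ ≤ M * t ^ k := fun t ht => by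
    rw [Real.norm_eq_abs, abs_mul, abs_of_pos (pow_pos ht k), mul_comm]
    exact mul_le_mul_of_nonneg_right (hM t ht) (pow_pos ht k).le
  have := norm_le_of_tendsto_zero_of_norm_deriv_le_mul_pow k hderiv
    (tendsto_pow_mul_nhdsGT_zero_of_bounded hk hbd) hbound hr
  rw [Real.norm_eq_abs, abs_mul, abs_of_pos (pow_pos hr k)] at this
  exact le_of_mul_le_mul_left (this.trans_eq (by ring)) (pow_pos hr k)

theorem hardy_radial_Linfty_general (F : ℝ → ℝ)
    (hF : ContDiffOn ℝ 1 F (Set.Ioi 0))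
    (hbd : ∃ B : ℝ, ∀ r > (0:ℝ), |F r| ≤ B)
    (M : ℝ)
    (hM : ∀ r > (0:ℝ), |deriv F r + (2 / r) * F r| ≤ M) :
    (∀ r > (0:ℝ), |F r| ≤ M / 3 * r) ∧
      (⨆ r : {r : ℝ // 0 < r}, |F r.1 / r.1|)
        ≤ (1 / 3) * ⨆ r : {r : ℝ // 0 < r}, |deriv F r.1 + (2 / r.1) * F r.1| := by
  have hardy : ∀ M' : ℝ, (∀ r > (0:ℝ), |deriv F r + (2 / r) * F r| ≤ M') →
      ∀ r > (0:ℝ), |F r| ≤ M' / 3 * r := fun M' hM' r hr => by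
    convert abs_le_mul_of_abs_deriv_add_div_mul_le 2 two_ne_zero
      (hF.differentiableOn one_ne_zero) hbd (by exact_mod_cast hM') hr using 3
    norm_num
  refine ⟨hardy M hM, ciSup_le fun r => ?_⟩
  have hbdd : BddAbove (range fun r : {r : ℝ // 0 < r} => |deriv F r.1 + (2 / r.1) * F r.1|) :=
    ⟨M, forall_mem_range.2 fun r => hM r.1 r.2⟩
  rw [abs_div, abs_of_pos r.2, div_le_iff₀ r.2]
  calc |F r| ≤ _ := hardy _ (fun s hs => le_ciSup hbdd ⟨s, hs⟩) r r.2
    _ = _ := by ring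

/-- The `L^∞` case of Lemma 2.4 of the paper: a Hardy-type inequality for the radial profile
`F` of a bounded radial function on `ℝ³`. If `|F' + (2/r) F| ≤ M` on `(0, ∞)` then
`|F(r)| ≤ (M/3) r`, and in particular `sup |F(r)/r| ≤ (1/3) sup |F'(r) + (2/r) F(r)|`. -/
theorem hardy_radial_Linfty (F : ℝ → ℝ)
    (hF : ContDiffOn ℝ 1 F (Set.Ioi 0))
    (hbd : ∃ B : ℝ, ∀ r > (0:ℝ), |F r| ≤ B)
    (M : ℝ) (hM₀ : 0 ≤ M)
    (hM : ∀ r > (0:ℝ), |deriv F r + (2 / r) * F r| ≤ M) :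
    (∀ r > (0:ℝ), |F r| ≤ M / 3 * r) ∧
      (⨆ r : {r : ℝ // 0 < r}, |F r.1 / r.1|)
        ≤ (1 / 3) * ⨆ r : {r : ℝ // 0 < r}, |deriv F r.1 + (2 / r.1) * F r.1| :=
  hardy_radial_Linfty_general F hF hbd M hM
end

section
/- Let F : (0,∞) → ℝ be continuously differentiable and bounded, and suppose ∫₀^∞ (F'(r) + (2/r) F(r))² r² dr < ∞. Then ∫₀^∞ (F(r)/r)² r² dr < ∞ and (∫₀^∞ (F(r)/r)² r² dr)^{1/2} ≤ (2/3) (∫₀^∞ (F'(r) + (2/r) F(r))² r² dr)^{1/2}. -/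
/-!
With `G = F' + 2F/r`, one has `G F r = (r F² / 2)' + (3/2) F²`. Integrating over `[a, b]` and
bounding `G F r ≤ (G r)² / 3 + 3F² / 4` gives
`∫ₐᵇ F² ≤ (4/9) ∫ₐᵇ G² r² + (2/3) a F(a)²`, the boundary term at `b` having the right sign.
Since `F` is bounded, the term at `a` vanishes as `a → 0`, and letting `b → ∞` yields the bound.
-/

open MeasureTheory Set Filter Topology

theorem integrableOn_Ioi_zero_of_intervalIntegral_le {f : ℝ → ℝ} {C K : ℝ}
    (hf : LocallyIntegrableOn f (Ioi 0)) (hf₀ : ∀ x ∈ Ioi (0 : ℝ), 0 ≤ f x)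
    (hbound : ∀ a b, 0 < a → a ≤ b → ∫ x in a..b, f x ≤ C + K * a) :
    IntegrableOn f (Ioi 0) ∧ ∫ x in Ioi 0, f x ≤ C := by
  set a : ℕ → ℝ := fun n => 1 / (n + 1)
  set b : ℕ → ℝ := fun n => n + 1
  have ha₀ : ∀ n, 0 < a n := fun n => by positivity
  have hab : ∀ n, a n ≤ b n := fun n => by
    simp only [a, b]
    rw [div_le_iff₀ (by positivity)]
    nlinarith [(n.cast_nonneg : (0 : ℝ) ≤ n)]
  have ha : Tendsto a atTop (𝓝 0) := tendsto_one_div_add_atTop_nhds_zero_nat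
  have hb : Tendsto b atTop atTop := tendsto_natCast_atTop_atTop.atTop_add tendsto_const_nhds
  have hφ : AECover (volume.restrict (Ioi 0)) atTop fun n => Ioc (a n) (b n) :=
    (aecover_Ioi_of_Ioi ha).inter (aecover_Iic hb)
  have hsub : ∀ n, Icc (a n) (b n) ⊆ Ioi 0 := fun n x hx => (ha₀ n).trans_le hx.1
  have hrestrict : ∀ n, (volume.restrict (Ioi (0 : ℝ))).restrict (Ioc (a n) (b n)) =
      volume.restrict (Ioc (a n) (b n)) := fun n =>
    Measure.restrict_restrict_of_subset (Ioc_subset_Icc_self.trans (hsub n))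
  have hfi : ∀ n, IntegrableOn f (Ioc (a n) (b n)) (volume.restrict (Ioi 0)) := fun n => by
    rw [IntegrableOn, hrestrict]
    exact (hf.integrableOn_compact_subset (hsub n) isCompact_Icc).mono_set Ioc_subset_Icc_self
  have hbound' : ∀ n, ∫ x in Ioc (a n) (b n), f x ∂(volume.restrict (Ioi 0)) ≤ C + K * a n := by
    intro n
    rw [hrestrict, ← intervalIntegral.integral_of_le (hab n)]
    exact hbound _ _ (ha₀ n) (hab n)
  have hlim : Tendsto (fun n => C + K * a n) atTop (𝓝 C) := by
    simpa using (ha.const_mul K).const_add C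
  have hint : IntegrableOn f (Ioi 0) := by
    refine hφ.integrable_of_integral_bounded_of_nonneg_ae (C + 1) hfi
      ((ae_restrict_mem measurableSet_Ioi).mono hf₀) ?_
    filter_upwards [hlim.eventually (eventually_le_nhds (lt_add_one C))] with n hn
    exact (hbound' n).trans hn
  exact ⟨hint, le_of_tendsto_of_tendsto' (hφ.integral_tendsto_of_countably_generated hint) hlim
    hbound'⟩

section

variable {F : ℝ → ℝ} {a b : ℝ}

theorem hasDerivAt_mul_sq_div_two (hF : ContDiffOn ℝ 1 F (Ioi 0)) {r : ℝ} (hr : 0 < r) :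
    HasDerivAt (fun r => r * F r ^ 2 / 2)
      ((deriv F r + 2 / r * F r) * F r * r - 3 / 2 * F r ^ 2) r := by
  have hFr : HasDerivAt F (deriv F r) r :=
    ((hF.differentiableOn one_ne_zero).differentiableAt (Ioi_mem_nhds hr)).hasDerivAt
  refine (((hasDerivAt_id' r).fun_mul (hFr.fun_pow 2)).div_const 2).congr_deriv ?_
  field_simp
  ring

theorem continuousOn_deriv_add_two_div_mul (hF : ContDiffOn ℝ 1 F (Ioi 0)) :
    ContinuousOn (fun r => deriv F r + 2 / r * F r) (Ioi 0) := by
  have hF' := hF.continuousOn_deriv_of_isOpen isOpen_Ioi le_rfl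
  have hF := hF.continuousOn
  have hinv : ContinuousOn (fun r : ℝ => 2 / r) (Ioi 0) :=
    continuousOn_const.div continuousOn_id fun r hr => ne_of_gt hr
  fun_prop

theorem intervalIntegral_hardy_identity (hF : ContDiffOn ℝ 1 F (Ioi 0)) (ha : 0 < a)
    (hb : 0 < b) :
    ∫ r in a..b, (deriv F r + 2 / r * F r) * F r * r =
      b * F b ^ 2 / 2 - a * F a ^ 2 / 2 + 3 / 2 * ∫ r in a..b, F r ^ 2 := by
  have hsub : uIcc a b ⊆ Ioi 0 := fun r hr => (lt_min ha hb).trans_le hr.1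
  have hFc := hF.continuousOn.mono hsub
  have hGc := (continuousOn_deriv_add_two_div_mul hF).mono hsub
  have hF2 : IntervalIntegrable (fun r => F r ^ 2) volume a b := (hFc.pow 2).intervalIntegrable
  have hGFr : IntervalIntegrable (fun r => (deriv F r + 2 / r * F r) * F r * r) volume a b :=
    ((hGc.mul hFc).mul continuousOn_id).intervalIntegrable
  calc ∫ r in a..b, (deriv F r + 2 / r * F r) * F r * r
      = (∫ r in a..b, ((deriv F r + 2 / r * F r) * F r * r - 3 / 2 * F r ^ 2)) +
          ∫ r in a..b, 3 / 2 * F r ^ 2 := by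
        rw [← intervalIntegral.integral_add (hGFr.sub (hF2.const_mul _)) (hF2.const_mul _)]
        simp only [sub_add_cancel]
    _ = _ := by
        rw [intervalIntegral.integral_eq_sub_of_hasDerivAt
          (fun r hr => hasDerivAt_mul_sq_div_two hF (hsub hr)) (hGFr.sub (hF2.const_mul _)),
          intervalIntegral.integral_const_mul]

theorem intervalIntegral_sq_le_hardy (hF : ContDiffOn ℝ 1 F (Ioi 0)) (ha : 0 < a) (hab : a ≤ b) :
    ∫ r in a..b, F r ^ 2 ≤
      4 / 9 * (∫ r in a..b, (deriv F r + 2 / r * F r) ^ 2 * r ^ 2) + 2 / 3 * a * F a ^ 2 := by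
  have hb : 0 < b := ha.trans_le hab
  have hsub : uIcc a b ⊆ Ioi 0 := fun r hr => (lt_min ha hb).trans_le hr.1
  have hFc := hF.continuousOn.mono hsub
  have hGc := (continuousOn_deriv_add_two_div_mul hF).mono hsub
  have hF2 : IntervalIntegrable (fun r => F r ^ 2) volume a b := (hFc.pow 2).intervalIntegrable
  have hG2 : IntervalIntegrable (fun r => (deriv F r + 2 / r * F r) ^ 2 * r ^ 2) volume a b :=
    ((hGc.pow 2).mul (continuousOn_id.pow 2)).intervalIntegrable
  have hGFr : IntervalIntegrable (fun r => (deriv F r + 2 / r * F r) * F r * r) volume a b :=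
    ((hGc.mul hFc).mul continuousOn_id).intervalIntegrable
  -- `G F r ≤ ε (G r)² / 2 + F² / (2ε)` with `ε = 2/3`, the weight giving the constant `4/9`.
  have hamgm : ∫ r in a..b, (deriv F r + 2 / r * F r) * F r * r ≤
      1 / 3 * (∫ r in a..b, (deriv F r + 2 / r * F r) ^ 2 * r ^ 2) +
        3 / 4 * ∫ r in a..b, F r ^ 2 := by
    rw [← intervalIntegral.integral_const_mul, ← intervalIntegral.integral_const_mul,
      ← intervalIntegral.integral_add (hG2.const_mul _) (hF2.const_mul _)]
    refine intervalIntegral.integral_mono_on hab hGFr ((hG2.const_mul _).add (hF2.const_mul _))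
      fun r _ => ?_
    nlinarith [sq_nonneg (2 * ((deriv F r + 2 / r * F r) * r) - 3 * F r)]
  have hbdry : 0 ≤ b * F b ^ 2 := by positivity
  linarith [intervalIntegral_hardy_identity hF ha hb]

theorem integrableOn_sq_and_integral_sq_le_hardy (hF : ContDiffOn ℝ 1 F (Ioi 0)) {B : ℝ}
    (hB : ∀ r > 0, |F r| ≤ B)
    (hInt : IntegrableOn (fun r => (deriv F r + 2 / r * F r) ^ 2 * r ^ 2) (Ioi 0)) :
    IntegrableOn (fun r => F r ^ 2) (Ioi 0) ∧
      ∫ r in Ioi 0, F r ^ 2 ≤ 4 / 9 * ∫ r in Ioi 0, (deriv F r + 2 / r * F r) ^ 2 * r ^ 2 := by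
  refine integrableOn_Ioi_zero_of_intervalIntegral_le (K := 2 / 3 * B ^ 2)
    ((hF.continuousOn.pow 2).locallyIntegrableOn measurableSet_Ioi) (fun r _ => sq_nonneg _)
    fun a b ha hab => (intervalIntegral_sq_le_hardy hF ha hab).trans ?_
  have hJ : ∫ r in a..b, (deriv F r + 2 / r * F r) ^ 2 * r ^ 2 ≤
      ∫ r in Ioi 0, (deriv F r + 2 / r * F r) ^ 2 * r ^ 2 := by
    rw [intervalIntegral.integral_of_le hab]
    exact setIntegral_mono_set hInt (.of_forall fun r => by positivity)
      (Ioc_subset_Ioi_self.trans (Ioi_subset_Ioi ha.le)).eventuallyLE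
  have hFa : F a ^ 2 ≤ B ^ 2 := by
    rw [← sq_abs]
    exact pow_le_pow_left₀ (abs_nonneg _) (hB a ha) 2
  nlinarith

end

/-- The `L²` case of Lemma 2.4 of the paper: a Hardy-type inequality for the radial profile
`F` of a bounded radial function on `ℝ³`, with the weighted measure `r² dr` on `(0, ∞)`. -/
theorem hardy_radial_L2 (F : ℝ → ℝ)
    (hF : ContDiffOn ℝ 1 F (Set.Ioi 0))
    (hbd : ∃ B : ℝ, ∀ r > (0:ℝ), |F r| ≤ B)
    (hInt : IntegrableOn (fun r => (deriv F r + (2 / r) * F r) ^ 2 * r ^ 2) (Set.Ioi 0)) :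
    IntegrableOn (fun r => (F r / r) ^ 2 * r ^ 2) (Set.Ioi 0) ∧
      Real.sqrt (∫ r in Set.Ioi (0:ℝ), (F r / r) ^ 2 * r ^ 2)
        ≤ (2 / 3) * Real.sqrt (∫ r in Set.Ioi (0:ℝ), (deriv F r + (2 / r) * F r) ^ 2 * r ^ 2) := by
  obtain ⟨B, hB⟩ := hbd
  obtain ⟨hint, hle⟩ := integrableOn_sq_and_integral_sq_le_hardy hF hB hInt
  have hsq : EqOn (fun r => (F r / r) ^ 2 * r ^ 2) (fun r => F r ^ 2) (Ioi 0) :=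
    fun r (hr : 0 < r) => by field_simp
  refine ⟨hint.congr_fun hsq.symm measurableSet_Ioi, ?_⟩
  rw [setIntegral_congr_fun measurableSet_Ioi hsq]
  calc √(∫ r in Ioi 0, F r ^ 2)
      ≤ √((2 / 3) ^ 2 * ∫ r in Ioi 0, (deriv F r + 2 / r * F r) ^ 2 * r ^ 2) :=
        Real.sqrt_le_sqrt (by norm_num [hle])
    _ = 2 / 3 * √(∫ r in Ioi 0, (deriv F r + 2 / r * F r) ^ 2 * r ^ 2) := by
        rw [Real.sqrt_mul (sq_nonneg _), Real.sqrt_sq (by norm_num)]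
end

section
/- Let 2 ≤ p < ∞. There exists a constant C = C(p) > 0 such that for every continuously differentiable bounded function F : (0,∞) → ℝ with ∫₀^∞ |F'(r) + (2/r) F(r)|^p r² dr < ∞, one has ∫₀^∞ |F(r)/r|^p r² dr < ∞ and (∫₀^∞ |F(r)/r|^p r² dr)^{1/p} ≤ C (∫₀^∞ |F'(r) + (2/r) F(r)|^p r² dr)^{1/p}. -/
/-!
With `g = F' + 2F/r` one has `(r²F)' = r²g`, and since `F` is bounded, `r²F(r) → 0` as `r → 0⁺`;
hence `|r²F(r)| ≤ ∫₀^r s²|g(s)| ds`. Hölder's inequality on `(0, r]` turns this into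
`|F(r)/r|^p r² ≤ r^(1-2p) ∫₀^r s^(2p)|g(s)|^p ds`. Integrating in `r` and exchanging the order of
integration, the inner integral `∫ₛ^∞ r^(1-2p) dr = s^(2-2p)/(2p-2)` leaves
`∫₀^∞ |F/r|^p r² dr ≤ (2p-2)⁻¹ ∫₀^∞ |g|^p r² dr`, so `C = (2p-2)^(-1/p)` works.
-/

open MeasureTheory Set Filter Topology
open scoped ENNReal

theorem lintegral_rpow_le_measure_univ_rpow_mul {α : Type*} [MeasurableSpace α]
    {μ : Measure α} {p : ℝ} (hp : 1 ≤ p) {f : α → ℝ≥0∞} (hf : AEMeasurable f μ) :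
    (∫⁻ a, f a ∂μ) ^ p ≤ μ univ ^ (p - 1) * ∫⁻ a, f a ^ p ∂μ := by
  have hp0 : 0 < p := by linarith
  have holder := ENNReal.lintegral_mul_norm_pow_le (hf.pow_const p)
    (aemeasurable_const (b := (1 : ℝ≥0∞))) (one_div_nonneg.2 hp0.le)
    (sub_nonneg.2 ((div_le_one hp0).2 hp)) (add_sub_cancel _ _)
  simp only [ENNReal.one_rpow, mul_one, ← ENNReal.rpow_mul, mul_one_div_cancel hp0.ne',
    ENNReal.rpow_one, lintegral_const, one_mul] at holder
  calc (∫⁻ a, f a ∂μ) ^ p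
      ≤ ((∫⁻ a, f a ^ p ∂μ) ^ (1 / p) * μ univ ^ (1 - 1 / p)) ^ p := by gcongr
    _ = μ univ ^ (p - 1) * ∫⁻ a, f a ^ p ∂μ := by
      rw [ENNReal.mul_rpow_of_nonneg _ _ hp0.le, ← ENNReal.rpow_mul, ← ENNReal.rpow_mul,
        one_div_mul_cancel hp0.ne', ENNReal.rpow_one, sub_mul, one_div_mul_cancel hp0.ne',
        one_mul, mul_comm]

theorem integrable_and_integral_le_of_lintegral_ofReal_le {α : Type*} [MeasurableSpace α]
    {μ : Measure α} {f g : α → ℝ} {c : ℝ} (hc : 0 ≤ c) (hf0 : 0 ≤ f)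
    (hf : AEStronglyMeasurable f μ) (hg0 : 0 ≤ g) (hg : Integrable g μ)
    (hfg : ∫⁻ x, ENNReal.ofReal (f x) ∂μ ≤ ENNReal.ofReal c * ∫⁻ x, ENNReal.ofReal (g x) ∂μ) :
    Integrable f μ ∧ ∫ x, f x ∂μ ≤ c * ∫ x, g x ∂μ := by
  rw [← ofReal_integral_eq_lintegral_ofReal hg (.of_forall hg0),
    ← ENNReal.ofReal_mul hc] at hfg
  refine ⟨⟨hf, (hasFiniteIntegral_iff_ofReal (.of_forall hf0)).2
    (hfg.trans_lt ENNReal.ofReal_lt_top)⟩, ?_⟩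
  rw [integral_eq_lintegral_of_nonneg_ae (.of_forall hf0) hf]
  exact ENNReal.toReal_le_of_le_ofReal (mul_nonneg hc (integral_nonneg hg0)) hfg

theorem enorm_le_lintegral_Ioc_of_hasDerivAt_of_tendsto {E : Type*} [NormedAddCommGroup E]
    [NormedSpace ℝ E] [CompleteSpace E] {f f' : ℝ → E} {a b : ℝ} (hab : a < b)
    (hderiv : ∀ x ∈ Ioc a b, HasDerivAt f (f' x) x) (hf' : ContinuousOn f' (Ioc a b))
    (hlim : Tendsto f (𝓝[>] a) (𝓝 0)) :
    ‖f b‖ₑ ≤ ∫⁻ x in Ioc a b, ‖f' x‖ₑ := by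
  have hsub : ∀ c ∈ Ioo a b, Icc c b ⊆ Ioc a b := fun c hc x hx => ⟨hc.1.trans_le hx.1, hx.2⟩
  have hdiff : ∀ c ∈ Ioo a b, ‖f b - f c‖ₑ ≤ ∫⁻ x in Ioc a b, ‖f' x‖ₑ := by
    intro c hc
    rw [← intervalIntegral.integral_eq_sub_of_hasDerivAt_of_le hc.2.le
      (fun x hx => (hderiv x (hsub c hc hx)).continuousAt.continuousWithinAt)
      (fun x hx => hderiv x (hsub c hc (Ioo_subset_Icc_self hx)))
      ((hf'.mono (hsub c hc)).intervalIntegrable_of_Icc hc.2.le),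
      intervalIntegral.integral_of_le hc.2.le]
    exact (enorm_integral_le_lintegral_enorm _).trans
      (lintegral_mono_set (Ioc_subset_Ioc_left hc.1.le))
  have hconv : Tendsto (fun c => ‖f b - f c‖ₑ) (𝓝[>] a) (𝓝 ‖f b‖ₑ) := by
    simpa using (tendsto_const_nhds.sub hlim).enorm
  exact le_of_tendsto hconv (eventually_of_mem (Ioo_mem_nhdsGT hab) hdiff)

theorem lintegral_Ioi_mul_lintegral_Ioc {W Φ : ℝ → ℝ≥0∞}
    (hW : AEMeasurable W (volume.restrict (Ioi 0)))
    (hΦ : AEMeasurable Φ (volume.restrict (Ioi 0))) :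
    ∫⁻ r in Ioi 0, W r * ∫⁻ s in Ioc 0 r, Φ s = ∫⁻ s in Ioi 0, (∫⁻ r in Ioi s, W r) * Φ s := by
  set K : ℝ → ℝ → ℝ≥0∞ := fun r s =>
    {z : ℝ × ℝ | z.2 ≤ z.1}.indicator (fun z => W z.1 * Φ z.2) (r, s)
  have hK : AEMeasurable (Function.uncurry K)
      ((volume.restrict (Ioi 0)).prod (volume.restrict (Ioi 0))) :=
    ((hW.comp_quasiMeasurePreserving Measure.quasiMeasurePreserving_fst).mul
      (hΦ.comp_quasiMeasurePreserving Measure.quasiMeasurePreserving_snd)).indicator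
      (measurableSet_le measurable_snd measurable_fst)
  have inner_s : ∀ r ∈ Ioi (0 : ℝ), W r * ∫⁻ s in Ioc 0 r, Φ s = ∫⁻ s in Ioi 0, K r s := by
    intro r _
    have hKr : K r = (Iic r).indicator (fun s => W r * Φ s) := by
      ext s; simp [K, indicator]
    rw [hKr, lintegral_indicator measurableSet_Iic, Measure.restrict_restrict measurableSet_Iic,
      inter_comm, Ioi_inter_Iic, lintegral_const_mul'' _ (hΦ.mono_set Ioc_subset_Ioi_self)]
  have inner_r : ∀ s ∈ Ioi (0 : ℝ), ∫⁻ r in Ioi 0, K r s = (∫⁻ r in Ioi s, W r) * Φ s := by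
    intro s hs
    have hKs : (fun r => K r s) = (Ici s).indicator (fun r => W r * Φ s) := by
      ext r; simp [K, indicator]
    rw [hKs, lintegral_indicator measurableSet_Ici, Measure.restrict_restrict measurableSet_Ici,
      inter_eq_left.2 (Ici_subset_Ioi.2 hs), Measure.restrict_congr_set Ioi_ae_eq_Ici.symm,
      lintegral_mul_const'' _ (hW.mono_set (Ioi_subset_Ioi hs.le))]
  calc ∫⁻ r in Ioi 0, W r * ∫⁻ s in Ioc 0 r, Φ s
      = ∫⁻ r in Ioi 0, ∫⁻ s in Ioi 0, K r s := setLIntegral_congr_fun measurableSet_Ioi inner_s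
    _ = ∫⁻ s in Ioi 0, ∫⁻ r in Ioi 0, K r s := lintegral_lintegral_swap hK
    _ = ∫⁻ s in Ioi 0, (∫⁻ r in Ioi s, W r) * Φ s :=
      setLIntegral_congr_fun measurableSet_Ioi inner_r

theorem lintegral_Ioi_ofReal_rpow {b s : ℝ} (hb : b < -1) (hs : 0 < s) :
    ∫⁻ r in Ioi s, ENNReal.ofReal (r ^ b) = ENNReal.ofReal (-s ^ (b + 1) / (b + 1)) := by
  rw [← ofReal_integral_eq_lintegral_ofReal (integrableOn_Ioi_rpow_of_lt hb hs),
    integral_Ioi_rpow_of_lt hb hs]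
  filter_upwards [ae_restrict_mem measurableSet_Ioi] with r hr
  exact Real.rpow_nonneg (hs.trans hr).le b

theorem lintegral_Ioi_rpow_mul_enorm_sq_mul_rpow {p s : ℝ} (hp : 1 < p) (hs : 0 < s) (x : ℝ) :
    (∫⁻ r in Ioi s, ENNReal.ofReal (r ^ (1 - 2 * p))) * ‖s ^ 2 * x‖ₑ ^ p =
      ENNReal.ofReal (1 / (2 * p - 2)) * ENNReal.ofReal (|x| ^ p * s ^ 2) := by
  have hpow : s ^ (-(2 * p - 2)) * (s ^ 2) ^ p = s ^ 2 := by
    rw [← Real.rpow_natCast s 2, ← Real.rpow_mul hs.le, ← Real.rpow_add hs]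
    norm_num
  rw [lintegral_Ioi_ofReal_rpow (by linarith) hs, Real.enorm_eq_ofReal_abs,
    ENNReal.ofReal_rpow_of_nonneg (abs_nonneg _) (by linarith),
    ← ENNReal.ofReal_mul' (by positivity), ← ENNReal.ofReal_mul' (by positivity), abs_mul,
    abs_of_pos (pow_pos hs 2), Real.mul_rpow (by positivity) (abs_nonneg _),
    show 1 - 2 * p + 1 = -(2 * p - 2) by ring, neg_div_neg_eq]
  congr 1
  calc s ^ (-(2 * p - 2)) / (2 * p - 2) * ((s ^ 2) ^ p * |x| ^ p)
      = 1 / (2 * p - 2) * (|x| ^ p * (s ^ (-(2 * p - 2)) * (s ^ 2) ^ p)) := by ring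
    _ = 1 / (2 * p - 2) * (|x| ^ p * s ^ 2) := by rw [hpow]

/-- The divergence of the radial vector field `x ↦ F(|x|) x / |x|` on `ℝ³`, as a function of
`r = |x|`. -/
noncomputable def radialDivergence (F : ℝ → ℝ) (r : ℝ) : ℝ := deriv F r + (2 / r) * F r

section radialDivergence

variable {F : ℝ → ℝ}

theorem hasDerivAt_sq_mul {r : ℝ} (hr : r ≠ 0) (hF : DifferentiableAt ℝ F r) :
    HasDerivAt (fun t => t ^ 2 * F t) (r ^ 2 * radialDivergence F r) r := by
  refine ((hasDerivAt_pow 2 r).fun_mul hF.hasDerivAt).congr_deriv ?_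
  simp only [radialDivergence]
  field_simp
  ring

theorem continuousOn_radialDivergence (hF : ContDiffOn ℝ 1 F (Ioi 0)) :
    ContinuousOn (radialDivergence F) (Ioi 0) := by
  have hderiv : ContinuousOn (deriv F) (Ioi 0) :=
    (hF.continuousOn_derivWithin isOpen_Ioi.uniqueDiffOn le_rfl).congr
      fun x hx => (derivWithin_of_isOpen isOpen_Ioi hx).symm
  exact hderiv.add
    ((continuousOn_const.div continuousOn_id fun x hx => hx.ne').mul hF.continuousOn)

theorem tendsto_sq_mul_nhdsGT_zero {B : ℝ} (hB : ∀ r > 0, |F r| ≤ B) :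
    Tendsto (fun t => t ^ 2 * F t) (𝓝[>] 0) (𝓝 0) := by
  have hsq : Tendsto (fun t : ℝ => t ^ 2) (𝓝[>] 0) (𝓝 0) :=
    tendsto_nhdsWithin_of_tendsto_nhds (by simpa using (continuous_pow 2).tendsto (0 : ℝ))
  exact hsq.zero_mul_isBoundedUnder_le
    ⟨B, eventually_map.2 (eventually_nhdsWithin_of_forall fun t ht => hB t ht)⟩

theorem enorm_sq_mul_le_lintegral_radialDivergence (hF : ContDiffOn ℝ 1 F (Ioi 0)) {B : ℝ}
    (hB : ∀ r > 0, |F r| ≤ B) {r : ℝ} (hr : 0 < r) :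
    ‖r ^ 2 * F r‖ₑ ≤ ∫⁻ s in Ioc 0 r, ‖s ^ 2 * radialDivergence F s‖ₑ :=
  enorm_le_lintegral_Ioc_of_hasDerivAt_of_tendsto hr
    (fun _ hs => hasDerivAt_sq_mul hs.1.ne'
      ((hF.differentiableOn one_ne_zero).differentiableAt (isOpen_Ioi.mem_nhds hs.1)))
    (((continuous_pow 2).continuousOn.mul (continuousOn_radialDivergence hF)).mono
      Ioc_subset_Ioi_self)
    (tendsto_sq_mul_nhdsGT_zero hB)

theorem ofReal_rpow_div_mul_sq_le {p : ℝ} (hp : 1 ≤ p) (hF : ContDiffOn ℝ 1 F (Ioi 0))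
    {B : ℝ} (hB : ∀ r > 0, |F r| ≤ B) {r : ℝ} (hr : 0 < r) :
    ENNReal.ofReal (|F r / r| ^ p * r ^ 2) ≤
      ENNReal.ofReal (r ^ (1 - 2 * p)) *
        ∫⁻ s in Ioc 0 r, ‖s ^ 2 * radialDivergence F s‖ₑ ^ p := by
  have habs : |F r / r| = r ^ (-3 : ℝ) * |r ^ 2 * F r| := by
    rw [Real.rpow_neg hr.le, abs_div, abs_mul, abs_of_pos hr, abs_of_pos (pow_pos hr 2)]
    norm_num
    field_simp
  have hscale : |F r / r| ^ p * r ^ 2 = r ^ (2 - 3 * p) * |r ^ 2 * F r| ^ p := by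
    rw [habs, Real.mul_rpow (by positivity) (abs_nonneg _), ← Real.rpow_mul hr.le,
      ← Real.rpow_natCast r 2, mul_right_comm, ← Real.rpow_add hr]
    ring_nf
  have hmeas : AEMeasurable (fun s => ‖s ^ 2 * radialDivergence F s‖ₑ)
      (volume.restrict (Ioc 0 r)) :=
    ((((continuous_pow 2).continuousOn.mul (continuousOn_radialDivergence hF)).mono
      Ioc_subset_Ioi_self).aemeasurable measurableSet_Ioc).enorm
  calc ENNReal.ofReal (|F r / r| ^ p * r ^ 2)
      = ENNReal.ofReal (r ^ (2 - 3 * p)) * ‖r ^ 2 * F r‖ₑ ^ p := by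
        rw [hscale, ENNReal.ofReal_mul (by positivity), Real.enorm_eq_ofReal_abs,
          ENNReal.ofReal_rpow_of_nonneg (abs_nonneg _) (by linarith)]
    _ ≤ ENNReal.ofReal (r ^ (2 - 3 * p)) *
          (∫⁻ s in Ioc 0 r, ‖s ^ 2 * radialDivergence F s‖ₑ) ^ p := by
        gcongr
        exact enorm_sq_mul_le_lintegral_radialDivergence hF hB hr
    _ ≤ ENNReal.ofReal (r ^ (2 - 3 * p)) * (volume (Ioc 0 r) ^ (p - 1) *
          ∫⁻ s in Ioc 0 r, ‖s ^ 2 * radialDivergence F s‖ₑ ^ p) := by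
        gcongr
        simpa using lintegral_rpow_le_measure_univ_rpow_mul hp hmeas
    _ = ENNReal.ofReal (r ^ (1 - 2 * p)) *
          ∫⁻ s in Ioc 0 r, ‖s ^ 2 * radialDivergence F s‖ₑ ^ p := by
        rw [Real.volume_Ioc, sub_zero, ENNReal.ofReal_rpow_of_nonneg hr.le (by linarith),
          ← mul_assoc, ← ENNReal.ofReal_mul (by positivity), ← Real.rpow_add hr]
        ring_nf

theorem lintegral_rpow_div_mul_sq_le {p : ℝ} (hp : 1 < p) (hF : ContDiffOn ℝ 1 F (Ioi 0))
    {B : ℝ} (hB : ∀ r > 0, |F r| ≤ B) :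
    ∫⁻ r in Ioi 0, ENNReal.ofReal (|F r / r| ^ p * r ^ 2) ≤
      ENNReal.ofReal (1 / (2 * p - 2)) *
        ∫⁻ r in Ioi 0, ENNReal.ofReal (|radialDivergence F r| ^ p * r ^ 2) := by
  have hmeas : AEMeasurable (fun s => ‖s ^ 2 * radialDivergence F s‖ₑ ^ p)
      (volume.restrict (Ioi 0)) :=
    (((continuous_pow 2).continuousOn.mul (continuousOn_radialDivergence hF)).aemeasurable
      measurableSet_Ioi).enorm.pow_const p
  calc ∫⁻ r in Ioi 0, ENNReal.ofReal (|F r / r| ^ p * r ^ 2)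
      ≤ ∫⁻ r in Ioi 0, ENNReal.ofReal (r ^ (1 - 2 * p)) *
          ∫⁻ s in Ioc 0 r, ‖s ^ 2 * radialDivergence F s‖ₑ ^ p :=
        setLIntegral_mono' measurableSet_Ioi fun r hr =>
          ofReal_rpow_div_mul_sq_le hp.le hF hB hr
    _ = ∫⁻ s in Ioi 0, ENNReal.ofReal (1 / (2 * p - 2)) *
          ENNReal.ofReal (|radialDivergence F s| ^ p * s ^ 2) := by
        rw [lintegral_Ioi_mul_lintegral_Ioc (by fun_prop) hmeas]
        exact setLIntegral_congr_fun measurableSet_Ioi fun s hs =>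
          lintegral_Ioi_rpow_mul_enorm_sq_mul_rpow hp hs _
    _ = _ := lintegral_const_mul' _ _ ENNReal.ofReal_ne_top

end radialDivergence

/-- Lemma 2.4 of the paper (general case `2 ≤ p < ∞`): a Hardy-type inequality for the radial
profile `F` of a bounded radial function on `ℝ³`, with the weighted measure `r² dr` on
`(0, ∞)` representing (up to `4π`) the `L^p(ℝ³)` norms of the corresponding radial functions. -/
theorem hardy_radial_Lp (p : ℝ) (hp : 2 ≤ p) :
    ∃ C > (0:ℝ), ∀ F : ℝ → ℝ,
      ContDiffOn ℝ 1 F (Set.Ioi 0) →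
      (∃ B : ℝ, ∀ r > (0:ℝ), |F r| ≤ B) →
      IntegrableOn (fun r => |deriv F r + (2 / r) * F r| ^ p * r ^ 2) (Set.Ioi 0) →
      IntegrableOn (fun r => |F r / r| ^ p * r ^ 2) (Set.Ioi 0) ∧
        (∫ r in Set.Ioi (0:ℝ), |F r / r| ^ p * r ^ 2) ^ (1 / p)
          ≤ C * (∫ r in Set.Ioi (0:ℝ), |deriv F r + (2 / r) * F r| ^ p * r ^ 2) ^ (1 / p) := by
  have hc : 0 < 1 / (2 * p - 2) := one_div_pos.2 (by linarith)
  refine ⟨(1 / (2 * p - 2)) ^ (1 / p), by positivity, fun F hF ⟨B, hB⟩ hi => ?_⟩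
  have hmeas : AEStronglyMeasurable (fun r => |F r / r| ^ p * r ^ 2)
      (volume.restrict (Ioi 0)) :=
    (((hF.continuousOn.div continuousOn_id fun r hr => hr.ne').abs.rpow_const
      fun _ _ => Or.inr (by linarith)).mul (continuous_pow 2).continuousOn).aestronglyMeasurable
      measurableSet_Ioi
  obtain ⟨hint, hle⟩ := integrable_and_integral_le_of_lintegral_ofReal_le hc.le
    (fun r => by positivity) hmeas (fun r => by positivity) hi
    (lintegral_rpow_div_mul_sq_le (by linarith) hF hB)
  refine ⟨hint, ?_⟩
  calc (∫ r in Ioi 0, |F r / r| ^ p * r ^ 2) ^ (1 / p)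
      ≤ (1 / (2 * p - 2) * ∫ r in Ioi 0, |radialDivergence F r| ^ p * r ^ 2) ^ (1 / p) := by
        gcongr
        exact hle
    _ = _ := Real.mul_rpow hc.le (integral_nonneg fun r => by positivity)
end

section
/- Let 0 < θ < 1. There exist constants C > 0 and s₀ ∈ (0, 1] such that for all s ∈ (0, s₀]: (s² + 2s)^θ − ((1 + s)^{2θ} − 1) ≥ C s^θ. -/
/-- The key inequality in the paper's concluding remark: for `0 < θ < 1` the quantity
`g(s) = (s² + 2s)^θ − ((1+s)^(2θ) − 1)` is bounded below by `C s^θ` for small `s > 0`,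
showing that the contraction property fails for subcritical powers. -/
theorem contraction_failure_lower_bound (θ : ℝ) (hθ₀ : 0 < θ) (hθ₁ : θ < 1) :
    ∃ C > (0:ℝ), ∃ s₀ ∈ Set.Ioc (0:ℝ) 1, ∀ s ∈ Set.Ioc (0:ℝ) s₀,
      C * s ^ θ ≤ (s ^ 2 + 2 * s) ^ θ - ((1 + s) ^ (2 * θ) - 1) := by
  have h1θ : (0:ℝ) < 1 - θ := by linarith
  refine ⟨1/2, by norm_num, (1/6 : ℝ) ^ ((1:ℝ)/(1-θ)), ⟨?_, ?_⟩, ?_⟩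
  · exact Real.rpow_pos_of_pos (by norm_num) _
  · exact Real.rpow_le_one (by norm_num) (by norm_num) (by positivity)
  · intro s ⟨hs0, hs1⟩
    have hsle1 : s ≤ 1 :=
      hs1.trans (Real.rpow_le_one (by norm_num) (by norm_num) (by positivity))
    -- (1+s)^(2θ) ≤ (1+s)^2 ≤ 1 + 3s
    have hA : (1 + s) ^ (2 * θ) ≤ 1 + 3 * s := by
      have h1 : (1 + s) ^ (2 * θ) ≤ (1 + s) ^ (2:ℝ) :=
        Real.rpow_le_rpow_of_exponent_le (by linarith) (by linarith)
      have h2 : (1 + s) ^ (2:ℝ) = (1 + s) ^ (2:ℕ) := by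
        rw [show (2:ℝ) = ((2:ℕ):ℝ) by norm_num, Real.rpow_natCast]
      rw [h2] at h1
      have h3 : (1 + s) ^ (2:ℕ) ≤ 1 + 3 * s := by nlinarith
      linarith
    -- (s²+2s)^θ ≥ (2s)^θ = 2^θ s^θ ≥ s^θ
    have hB : s ^ θ ≤ (s ^ 2 + 2 * s) ^ θ := by
      have h1 : (2 * s) ^ θ ≤ (s ^ 2 + 2 * s) ^ θ :=
        Real.rpow_le_rpow (by positivity) (by nlinarith) hθ₀.le
      have h2 : (2 * s) ^ θ = 2 ^ θ * s ^ θ :=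
        Real.mul_rpow (by norm_num) hs0.le
      have h3 : (1:ℝ) ≤ 2 ^ θ := Real.one_le_rpow (by norm_num) hθ₀.le
      nlinarith [Real.rpow_nonneg hs0.le θ]
    -- 3 s ≤ (1/2) s^θ
    have hC : 3 * s ≤ (1/2) * s ^ θ := by
      have hsplit : s = s ^ (1 - θ) * s ^ θ := by
        rw [← Real.rpow_add hs0, sub_add_cancel, Real.rpow_one]
      have h1 : s ^ (1 - θ) ≤ ((1/6 : ℝ) ^ ((1:ℝ)/(1-θ))) ^ (1 - θ) :=
        Real.rpow_le_rpow hs0.le hs1 h1θ.le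
      have h2 : ((1/6 : ℝ) ^ ((1:ℝ)/(1-θ))) ^ (1 - θ) = 1/6 := by
        rw [← Real.rpow_mul (by norm_num), div_mul_cancel₀ _ h1θ.ne', Real.rpow_one]
      rw [h2] at h1
      calc 3 * s = 3 * (s ^ (1 - θ) * s ^ θ) := by rw [← hsplit]
        _ ≤ 3 * ((1/6) * s ^ θ) := by
            have := Real.rpow_nonneg hs0.le θ
            nlinarith
        _ = (1/2) * s ^ θ := by ring
    linarith
end
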